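/- The integral ∫_0^1 ln[(cos(π/16) − x)² + sin²(π/16)] dx is strictly less than −1.488. -/

import Mathlib

/-!
Integrating by parts, `(x - c) log((x - c)² + s²) - 2x + 2s arctan((x - c)/s)` is a primitive of
`log((x - c)² + s²)`. For `c = cos θ`, `s = sin θ` the arctangents at the endpoints `0` and `1` are
`θ - π/2` and `θ/2`, so the integral is `(1 - cos θ) log(2 - 2 cos θ) - 2 + (π - θ) sin θ`, which
is `-1.48803…` at `θ = π/16`. The margin of `3·10⁻⁵` is certified through the nested radicals for
`cos (π/16)` and `sin (π/16)`, `π < 3.141593`, and `log y ≤ 64 (y^(1/64) - 1)`.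
-/

open Real Set intervalIntegral

noncomputable def logSqAddSqPrimitive (c s y : ℝ) : ℝ :=
  (y - c) * log ((y - c) ^ 2 + s ^ 2) - 2 * y + 2 * s * arctan ((y - c) / s)

theorem hasDerivAt_logSqAddSqPrimitive {s : ℝ} (hs : s ≠ 0) (c x : ℝ) :
    HasDerivAt (logSqAddSqPrimitive c s) (log ((x - c) ^ 2 + s ^ 2)) x := by
  have hq : (x - c) ^ 2 + s ^ 2 ≠ 0 := by positivity
  have hshift : HasDerivAt (fun y : ℝ => y - c) 1 x := (hasDerivAt_id x).sub_const c
  have hlog := ((hshift.fun_pow 2).add_const (s ^ 2)).log hq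
  have harctan := (hasDerivAt_arctan ((x - c) / s)).comp x (hshift.div_const s)
  refine (((hshift.mul hlog).sub ((hasDerivAt_id x).const_mul 2)).add
    (harctan.const_mul (2 * s))).congr_deriv ?_
  field_simp
  ring

theorem continuous_log_sq_add_sq {s : ℝ} (hs : s ≠ 0) (c : ℝ) :
    Continuous fun x : ℝ => log ((x - c) ^ 2 + s ^ 2) :=
  (by fun_prop : Continuous fun x : ℝ => (x - c) ^ 2 + s ^ 2).log fun x => by positivity

theorem integral_log_sq_add_sq {s : ℝ} (hs : s ≠ 0) (a b c : ℝ) :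
    ∫ x in a..b, log ((x - c) ^ 2 + s ^ 2) =
      logSqAddSqPrimitive c s b - logSqAddSqPrimitive c s a :=
  integral_eq_sub_of_hasDerivAt (fun x _ => hasDerivAt_logSqAddSqPrimitive hs c x)
    ((continuous_log_sq_add_sq hs c).intervalIntegrable a b)

theorem one_sub_cos_div_sin_eq_tan_half (θ : ℝ) : (1 - cos θ) / sin θ = tan (θ / 2) := by
  obtain ⟨h, rfl⟩ : ∃ h, θ = 2 * h := ⟨θ / 2, by ring⟩
  rw [mul_div_cancel_left₀ h two_ne_zero, tan_eq_sin_div_cos, cos_two_mul, sin_two_mul]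
  rcases eq_or_ne (sin h) 0 with h0 | h0
  · simp [h0]
  · rw [← mul_div_mul_left (sin h) (cos h) (mul_ne_zero two_ne_zero h0)]
    congr 1
    linear_combination -2 * sin_sq_add_cos_sq h

theorem arctan_one_sub_cos_div_sin {θ : ℝ} (hθ : θ ∈ Ioo (-π) π) :
    arctan ((1 - cos θ) / sin θ) = θ / 2 := by
  rw [one_sub_cos_div_sin_eq_tan_half, arctan_tan] <;> linarith [hθ.1, hθ.2]

theorem arctan_cos_div_sin {θ : ℝ} (hθ : θ ∈ Ioo 0 π) : arctan (cos θ / sin θ) = π / 2 - θ := by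
  have hcot : cos θ / sin θ = tan (π / 2 - θ) := by
    rw [tan_eq_sin_div_cos, sin_pi_div_two_sub, cos_pi_div_two_sub]
  rw [hcot, arctan_tan] <;> linarith [hθ.1, hθ.2]

theorem integral_log_cos_sub_sq_add_sin_sq {θ : ℝ} (hθ : θ ∈ Ioo 0 π) :
    ∫ x in (0 : ℝ)..1, log ((cos θ - x) ^ 2 + sin θ ^ 2) =
      (1 - cos θ) * log (2 - 2 * cos θ) - 2 + (π - θ) * sin θ := by
  have hsin : sin θ ≠ 0 := (sin_pos_of_mem_Ioo hθ).ne'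
  simp_rw [sub_sq_comm (cos θ)]
  rw [integral_log_sq_add_sq hsin, logSqAddSqPrimitive, logSqAddSqPrimitive,
    zero_sub, neg_div, arctan_neg, arctan_cos_div_sin hθ,
    arctan_one_sub_cos_div_sin ⟨by linarith [hθ.1, pi_pos], hθ.2⟩]
  have hpyth := sin_sq_add_cos_sq θ
  rw [show (1 - cos θ) ^ 2 + sin θ ^ 2 = 2 - 2 * cos θ by linear_combination hpyth,
    show (-cos θ) ^ 2 + sin θ ^ 2 = 1 by linear_combination hpyth, log_one]
  ring

theorem sqrt_mem_Ioo {x a b : ℝ} (ha : 0 ≤ a) (hb : 0 < b) (hx : x ∈ Ioo (a ^ 2) (b ^ 2)) :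
    √x ∈ Ioo a b :=
  ⟨(lt_sqrt ha).2 hx.1, (sqrt_lt' hb).2 hx.2⟩

theorem sqrt_two_add_sqrt_two_mem_Ioo : √(2 + √2) ∈ Ioo 1.84775906 1.84775907 := by
  have h : √2 ∈ Ioo 1.41421356 1.41421357 :=
    sqrt_mem_Ioo (by norm_num) (by norm_num) ⟨by norm_num, by norm_num⟩
  exact sqrt_mem_Ioo (by norm_num) (by norm_num) ⟨by linarith [h.1], by linarith [h.2]⟩

theorem cos_pi_div_sixteen_mem_Ioo : cos (π / 16) ∈ Ioo 0.980785275 0.980785285 := by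
  have h := sqrt_two_add_sqrt_two_mem_Ioo
  have h' : √(2 + √(2 + √2)) ∈ Ioo 1.96157055 1.96157057 :=
    sqrt_mem_Ioo (by norm_num) (by norm_num) ⟨by linarith [h.1], by linarith [h.2]⟩
  rw [cos_pi_div_sixteen]
  constructor <;> linarith [h'.1, h'.2]

theorem sin_pi_div_sixteen_lt : sin (π / 16) < 0.19509035 := by
  have h := sqrt_two_add_sqrt_two_mem_Ioo
  have h' : √(2 - √(2 + √2)) < 0.3901807 := (sqrt_lt' (by norm_num)).2 (by linarith [h.1])
  rw [sin_pi_div_sixteen]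
  linarith

theorem log_le_mul_sub_one_of_le_pow {y t : ℝ} (n : ℕ) (hy : 0 < y) (ht : 0 < t) (h : y ≤ t ^ n) :
    log y ≤ n * (t - 1) :=
  calc log y ≤ log (t ^ n) := log_le_log hy h
    _ = n * log t := log_pow t n
    _ ≤ n * (t - 1) := by gcongr; exact log_le_sub_one_of_pos ht

theorem log_two_sub_two_cos_pi_div_sixteen_le : log (2 - 2 * cos (π / 16)) ≤ -3.2585 := by
  have hc := cos_pi_div_sixteen_mem_Ioo
  have hmono : log (2 - 2 * cos (π / 16)) ≤ log (1.2297424 / 2 ^ 5) :=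
    log_le_log (by linarith [hc.2]) (by linarith [hc.1])
  have hnum : log 1.2297424 ≤ 64 * (1.0032366 - 1) := by
    exact_mod_cast log_le_mul_sub_one_of_le_pow 64 (by norm_num) (by norm_num) (by norm_num)
  rw [log_div (by norm_num) (by norm_num), Real.log_pow] at hmono
  push_cast at hmono
  linarith [log_two_gt_d9]

theorem log_integral_bound :
    (∫ x in (0:ℝ)..1,
      Real.log ((Real.cos (Real.pi / 16) - x)^2 + (Real.sin (Real.pi / 16))^2)) < -1.488 := by
  rw [integral_log_cos_sub_sq_add_sin_sq ⟨by positivity, by linarith [pi_pos]⟩]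
  have hc := cos_pi_div_sixteen_mem_Ioo
  have hlog : (1 - cos (π / 16)) * log (2 - 2 * cos (π / 16)) ≤ (1 - 0.980785285) * -3.2585 :=
    calc (1 - cos (π / 16)) * log (2 - 2 * cos (π / 16)) ≤ (1 - cos (π / 16)) * -3.2585 := by
          gcongr
          · linarith [hc.2]
          · exact log_two_sub_two_cos_pi_div_sixteen_le
      _ ≤ (1 - 0.980785285) * -3.2585 := by linarith [hc.2]
  have harc : (π - π / 16) * sin (π / 16) < 15 / 16 * 3.141593 * 0.19509035 := by
    rw [show π - π / 16 = 15 / 16 * π by ring]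
    gcongr
    · exact (sin_pos_of_pos_of_lt_pi (by positivity) (by linarith [pi_pos])).le
    · exact pi_lt_d6
    · exact sin_pi_div_sixteen_lt
  norm_num at hlog harc ⊢
  linarith
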